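/- arXiv:2102.13220 — 2 statements merged into one kernel-verified Lean document; each statement's English description precedes it below -/
import Mathlib

section
/- Let A_1, …, A_d ∈ ℝ^{n×n} be symmetric positive semidefinite matrices. Then OptSOS_d(A) ≤ OptSDP(A); that is, the infimum of γ^{1/d} over all γ ≥ 0 such that γ‖x‖^{2d} − ∏_{i=1}^d ⟨x, A_i x⟩ is a sum of squares of real polynomials is at most OptSDP(A). -/
/-!
Let `X₀` maximize `∏ᵢ tr (Aᵢ X)` over the compact spectahedron `{X ⪰ 0, tr X = 1}` and put
`aᵢ = tr (Aᵢ X₀)`. If some `Aᵢ = 0`, then `γ = 0` is a certificate. Otherwise every `aᵢ > 0`,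
and the first-order optimality condition at `X₀` says `∑ᵢ tr (Aᵢ Y) / aᵢ ≤ d` on the
spectahedron, that is `d • 1 - ∑ᵢ aᵢ⁻¹ • Aᵢ ⪰ 0`. With `pᵢ = ⟨x, Aᵢ x⟩ / aᵢ` this makes
`d ‖x‖² - ∑ᵢ pᵢ`, and hence `(d ‖x‖²)ᵈ - (∑ᵢ pᵢ)ᵈ`, a sum of squares. The AM–GM inequality
`(∑ᵢ pᵢ)ᵈ ≥ dᵈ ∏ᵢ pᵢ` has a sum-of-squares certificate whenever the `pᵢ` are sums of squares
(symmetrize over permutations and move exponents one unit at a time, as in Muirhead's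
inequality). Together they certify `γ ‖x‖²ᵈ - ∏ᵢ ⟨x, Aᵢ x⟩` for `γ = ∏ᵢ aᵢ`, and `γ ^ (1 / d)`
is the SDP value at `X₀`.
-/

open Matrix MvPolynomial

/-- The quadratic form `x ↦ xᵀ A x` as a polynomial. -/
noncomputable def quadFormPoly (n : ℕ) (A : Matrix (Fin n) (Fin n) ℝ) :
    MvPolynomial (Fin n) ℝ :=
  ∑ a, ∑ b, C (A a b) * X a * X b

/-- The polynomial `‖x‖² = ∑ xⱼ²`. -/
noncomputable def normSqPoly (n : ℕ) : MvPolynomial (Fin n) ℝ := ∑ j, X j ^ 2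

/-- A polynomial is a sum of squares. -/
def IsSOS {n : ℕ} (p : MvPolynomial (Fin n) ℝ) : Prop :=
  ∃ (m : ℕ) (f : Fin m → MvPolynomial (Fin n) ℝ), p = ∑ j, (f j) ^ 2

namespace IsSumSq

variable {R : Type*} [CommRing R] {a b : R}

theorem pow (ha : IsSumSq a) (k : ℕ) : IsSumSq (a ^ k) := by
  simpa using IsSumSq.prod (I := Finset.range k) fun _ _ => ha

theorem of_natCast_mul [Algebra ℚ R] {m : ℕ} (hm : m ≠ 0) (h : IsSumSq ((m : R) * a)) :
    IsSumSq a := by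
  set u := algebraMap ℚ R (m : ℚ)⁻¹
  have hu : u * m = 1 := by
    rw [← map_natCast (algebraMap ℚ R), ← map_mul, inv_mul_cancel₀ (Nat.cast_ne_zero.2 hm),
      map_one]
  convert ((mul_self u).mul (natCast m)).mul h using 1
  linear_combination (-(u * m) - 1) * a * hu

theorem pow_sub_pow (ha : IsSumSq a) (hb : IsSumSq b) (hab : IsSumSq (a - b)) (k : ℕ) :
    IsSumSq (a ^ k - b ^ k) := by
  rw [← geom_sum₂_mul]
  exact (IsSumSq.sum fun _ _ => (ha.pow _).mul (hb.pow _)).mul hab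

theorem sub_mul_pow_sub_pow (ha : IsSumSq a) (hb : IsSumSq b) (k : ℕ) :
    IsSumSq ((a - b) * (a ^ k - b ^ k)) := by
  rw [← geom_sum₂_mul, mul_left_comm]
  exact (IsSumSq.sum fun _ _ => (ha.pow _).mul (hb.pow _)).mul (mul_self _)

end IsSumSq

theorem exists_two_le_and_exists_eq_zero {ι : Type*} [Fintype ι] {c : ι → ℕ}
    (hc : ∑ i, c i = Fintype.card ι) (hc1 : c ≠ 1) : (∃ i, 2 ≤ c i) ∧ ∃ j, c j = 0 := by
  have hc' : ∑ i, c i = ∑ _i : ι, 1 := by simpa using hc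
  refine ⟨?_, ?_⟩ <;> by_contra! h <;> refine hc1 (funext fun l => ?_)
  · exact (Finset.sum_eq_sum_iff_of_le fun l _ => Nat.le_of_lt_succ (h l)).1 hc' l
      (Finset.mem_univ l)
  · exact ((Finset.sum_eq_sum_iff_of_le fun l _ => Nat.one_le_iff_ne_zero.2 (h l)).1 hc'.symm l
      (Finset.mem_univ l)).symm

section AMGM

variable {R : Type*} [CommRing R] {ι : Type*} [Fintype ι] [DecidableEq ι] {p : ι → R}

open Finset Function

def symmMonomial (p : ι → R) (c : ι → ℕ) : R :=
  ∑ σ : Equiv.Perm ι, ∏ i, p (σ i) ^ c i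

theorem symmMonomial_one (p : ι → R) :
    symmMonomial p 1 = (Fintype.card ι).factorial * ∏ i, p i := by
  simp only [symmMonomial, Pi.one_apply, pow_one, Equiv.prod_comp, sum_const, card_univ,
    Fintype.card_perm, nsmul_eq_mul]

variable {c c' : ι → ℕ} {i j : ι} {k : ℕ}

theorem isSumSq_prod_pow_sub_add_swap (hp : ∀ i, IsSumSq (p i)) (hij : i ≠ j)
    (hci : c i = k + 2) (hcj : c j = 0) (hc'i : c' i = k + 1) (hc'j : c' j = 1)
    (hc' : ∀ l ∈ ({i, j}ᶜ : Finset ι), c' l = c l) (σ : Equiv.Perm ι) :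
    IsSumSq (∏ l, p (σ l) ^ c l - ∏ l, p (σ l) ^ c' l +
      (∏ l, p ((σ * Equiv.swap i j) l) ^ c l - ∏ l, p ((σ * Equiv.swap i j) l) ^ c' l)) := by
  have hsplit : ∀ (π : Equiv.Perm ι) (e : ι → ℕ),
      ∏ l, p (π l) ^ e l =
        p (π i) ^ e i * p (π j) ^ e j * ∏ l ∈ {i, j}ᶜ, p (π l) ^ e l :=
    fun π e => by rw [← prod_pair (f := fun l => p (π l) ^ e l) hij, prod_mul_prod_compl]
  have hoff : ∀ l ∈ ({i, j}ᶜ : Finset ι), (σ * Equiv.swap i j) l = σ l ∧ c' l = c l := by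
    intro l hl
    refine ⟨?_, hc' l hl⟩
    simp only [mem_compl, mem_insert, mem_singleton, not_or] at hl
    simp [Equiv.swap_apply_of_ne_of_ne hl.1 hl.2]
  set rest := ∏ l ∈ {i, j}ᶜ, p (σ l) ^ c l
  have h₁ : ∏ l ∈ {i, j}ᶜ, p (σ l) ^ c' l = rest :=
    prod_congr rfl fun l hl => by rw [(hoff l hl).2]
  have h₂ : ∏ l ∈ {i, j}ᶜ, p ((σ * Equiv.swap i j) l) ^ c l = rest :=
    prod_congr rfl fun l hl => by rw [(hoff l hl).1]
  have h₃ : ∏ l ∈ {i, j}ᶜ, p ((σ * Equiv.swap i j) l) ^ c' l = rest :=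
    prod_congr rfl fun l hl => by rw [(hoff l hl).1, (hoff l hl).2]
  have hi : (σ * Equiv.swap i j) i = σ j := by simp
  have hj : (σ * Equiv.swap i j) j = σ i := by simp
  have key : ∏ l, p (σ l) ^ c l - ∏ l, p (σ l) ^ c' l +
      (∏ l, p ((σ * Equiv.swap i j) l) ^ c l - ∏ l, p ((σ * Equiv.swap i j) l) ^ c' l) =
        rest * ((p (σ i) - p (σ j)) * (p (σ i) ^ (k + 1) - p (σ j) ^ (k + 1))) := by
    simp only [hsplit, h₁, h₂, h₃, hi, hj, hci, hcj, hc'i, hc'j]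
    ring
  rw [key]
  exact (IsSumSq.prod fun l _ => (hp _).pow _).mul ((hp _).sub_mul_pow_sub_pow (hp _) _)

theorem isSumSq_symmMonomial_sub_symmMonomial [Algebra ℚ R] (hp : ∀ i, IsSumSq (p i))
    (hij : i ≠ j) (hci : c i = k + 2) (hcj : c j = 0) (hc'i : c' i = k + 1) (hc'j : c' j = 1)
    (hc' : ∀ l ∈ ({i, j}ᶜ : Finset ι), c' l = c l) :
    IsSumSq (symmMonomial p c - symmMonomial p c') := by
  set D := fun σ : Equiv.Perm ι => ∏ l, p (σ l) ^ c l - ∏ l, p (σ l) ^ c' l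
  -- reindexing by `σ ↦ σ * swap i j` writes twice the difference as a sum of the pairs above
  have hswap : ∑ σ, D (σ * Equiv.swap i j) = ∑ σ, D σ :=
    Fintype.sum_equiv (Equiv.mulRight (Equiv.swap i j)) _ _ fun _ => rfl
  refine IsSumSq.of_natCast_mul two_ne_zero ?_
  rw [symmMonomial, symmMonomial, ← sum_sub_distrib, Nat.cast_two, two_mul]
  nth_rewrite 2 [← hswap]
  rw [← sum_add_distrib]
  exact IsSumSq.sum fun σ _ =>
    isSumSq_prod_pow_sub_add_swap hp hij hci hcj hc'i hc'j hc' σ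

-- Moving one unit of exponent from some `c i ≥ 2` to some `c j = 0` costs a sum of squares and
-- removes a zero exponent, so induct on the number of zero exponents until `c = 1`.
theorem isSumSq_symmMonomial_sub [Algebra ℚ R] (hp : ∀ i, IsSumSq (p i))
    (hc : ∑ i, c i = Fintype.card ι) :
    IsSumSq (symmMonomial p c - (Fintype.card ι).factorial * ∏ i, p i) := by
  induction hz : #{l | c l = 0} using Nat.strong_induction_on generalizing c with
  | _ z ih =>
  by_cases hc1 : c = 1
  · rw [hc1, symmMonomial_one, sub_self]
    exact .zero
  obtain ⟨⟨i, hi⟩, ⟨j, hj⟩⟩ := exists_two_le_and_exists_eq_zero hc hc1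
  obtain ⟨k, hk⟩ : ∃ k, c i = k + 2 := ⟨c i - 2, by omega⟩
  have hij : i ≠ j := by rintro rfl; omega
  set c' := update (update c i (k + 1)) j 1
  have hc'i : c' i = k + 1 := by simp [c', hij]
  have hc'j : c' j = 1 := by simp [c']
  have hc' : ∀ l ∈ ({i, j}ᶜ : Finset ι), c' l = c l := fun l hl => by
    simp only [mem_compl, mem_insert, mem_singleton, not_or] at hl
    simp [c', hl.1, hl.2]
  have hsum : ∑ l, c' l = Fintype.card ι := by
    rw [← hc, ← sum_add_sum_compl {i, j}, ← sum_add_sum_compl {i, j} c, sum_pair hij,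
      sum_pair hij, hc'i, hc'j, hk, hj, sum_congr rfl hc']
  have hzero : #{l | c' l = 0} < z := by
    refine hz ▸ card_lt_card (ssubset_iff_of_subset ?_ |>.2 ⟨j, by simp [hj], by simp [hc'j]⟩)
    intro l hl
    simp only [mem_filter, mem_univ, true_and] at hl ⊢
    have hli : l ≠ i := by rintro rfl; simp [hc'i] at hl
    have hlj : l ≠ j := by rintro rfl; simp [hc'j] at hl
    rwa [← hc' l (by simp [hli, hlj])]
  rw [← sub_add_sub_cancel _ (symmMonomial p c')]
  exact (isSumSq_symmMonomial_sub_symmMonomial hp hij hk hj hc'i hc'j hc').add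
    (ih _ hzero hsum rfl)

theorem prod_comp_eq_prod_pow_card_fiber (q : ι → R) (g : ι → ι) :
    ∏ k, q (g k) = ∏ i, q i ^ #{k | g k = i} := by
  simp only [← prod_fiberwise' univ g q, prod_const]

theorem sum_pow_card_eq_sum_prod (q : ι → R) :
    (∑ i, q i) ^ Fintype.card ι = ∑ g : ι → ι, ∏ k, q (g k) := by
  rw [← card_univ, ← prod_const, prod_univ_sum, Fintype.piFinset_univ]

theorem factorial_mul_sum_pow_card_eq_sum_symmMonomial (p : ι → R) :
    ((Fintype.card ι).factorial : R) * (∑ i, p i) ^ Fintype.card ι =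
      ∑ g : ι → ι, symmMonomial p fun i => #{k | g k = i} := by
  calc ((Fintype.card ι).factorial : R) * (∑ i, p i) ^ Fintype.card ι
      = ∑ σ : Equiv.Perm ι, (∑ i, p (σ i)) ^ Fintype.card ι := by
        simp only [Equiv.sum_comp, sum_const, card_univ, Fintype.card_perm, nsmul_eq_mul]
    _ = ∑ g : ι → ι, ∑ σ : Equiv.Perm ι, ∏ k, p (σ (g k)) := by
        simp_rw [sum_pow_card_eq_sum_prod]
        exact Finset.sum_comm
    _ = ∑ g : ι → ι, symmMonomial p fun i => #{k | g k = i} :=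
        sum_congr rfl fun g _ => sum_congr rfl fun σ _ =>
          prod_comp_eq_prod_pow_card_fiber (fun i => p (σ i)) g

theorem isSumSq_sum_pow_card_sub_prod [Algebra ℚ R] (hp : ∀ i, IsSumSq (p i)) :
    IsSumSq ((∑ i, p i) ^ Fintype.card ι -
      (Fintype.card ι : R) ^ Fintype.card ι * ∏ i, p i) := by
  refine IsSumSq.of_natCast_mul (Nat.factorial_ne_zero (Fintype.card ι)) ?_
  rw [mul_sub, factorial_mul_sum_pow_card_eq_sum_symmMonomial, mul_left_comm, ← Nat.cast_pow,
    ← Fintype.card_fun, ← nsmul_eq_mul, ← card_univ, ← sum_const, ← sum_sub_distrib]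
  exact IsSumSq.sum fun g _ =>
    isSumSq_symmMonomial_sub hp (card_eq_sum_card_fiberwise (by simp)).symm

end AMGM

section Polynomial

variable {n : ℕ}

theorem isSOS_iff_isSumSq {p : MvPolynomial (Fin n) ℝ} : IsSOS p ↔ IsSumSq p := by
  refine ⟨fun ⟨_, f, hp⟩ => hp ▸ IsSumSq.sum_sq _ f, fun hp => ?_⟩
  induction hp with
  | zero => exact ⟨0, ![], by simp⟩
  | sq_add a _ ih =>
    obtain ⟨m, f, rfl⟩ := ih
    exact ⟨m + 1, Fin.cons a f, by simp [Fin.sum_univ_succ, sq]⟩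

theorem isSumSq_C {σ : Type*} {c : ℝ} (hc : 0 ≤ c) : IsSumSq (C c : MvPolynomial σ ℝ) := by
  rw [← Real.mul_self_sqrt hc, C_mul]
  exact .mul_self _

theorem isSumSq_normSqPoly : IsSumSq (normSqPoly n) := IsSumSq.sum_sq _ _

theorem quadFormPoly_zero : quadFormPoly n 0 = 0 := by
  simp [quadFormPoly]

theorem quadFormPoly_one : quadFormPoly n 1 = normSqPoly n := by
  refine Finset.sum_congr rfl fun a _ => ?_
  rw [Finset.sum_eq_single a (fun b _ hb => by simp [one_apply_ne' hb]) (by simp)]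
  simp [sq]

theorem quadFormPoly_smul (c : ℝ) (M : Matrix (Fin n) (Fin n) ℝ) :
    quadFormPoly n (c • M) = C c * quadFormPoly n M := by
  simp [quadFormPoly, Finset.mul_sum, mul_assoc]

theorem quadFormPoly_sub (M N : Matrix (Fin n) (Fin n) ℝ) :
    quadFormPoly n (M - N) = quadFormPoly n M - quadFormPoly n N := by
  simp [quadFormPoly, sub_mul]

theorem quadFormPoly_sum {ι : Type*} (s : Finset ι) (M : ι → Matrix (Fin n) (Fin n) ℝ) :
    quadFormPoly n (∑ i ∈ s, M i) = ∑ i ∈ s, quadFormPoly n (M i) := by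
  simp only [quadFormPoly, Matrix.sum_apply, map_sum, Finset.sum_mul]
  exact (Finset.sum_congr rfl fun _ _ => Finset.sum_comm).trans Finset.sum_comm

open scoped MatrixOrder in
theorem isSumSq_quadFormPoly {M : Matrix (Fin n) (Fin n) ℝ} (hM : M.PosSemidef) :
    IsSumSq (quadFormPoly n M) := by
  obtain ⟨B, rfl⟩ := CStarAlgebra.nonneg_iff_eq_star_mul_self.mp hM.nonneg
  have : quadFormPoly n (star B * B) = ∑ k, (∑ a, C (B k a) * X a) ^ 2 := by
    simp only [quadFormPoly, sq, Matrix.mul_apply, star_apply, star_trivial, map_sum, C_mul,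
      Finset.sum_mul, Finset.mul_sum]
    rw [(Finset.sum_congr rfl fun _ _ => Finset.sum_comm).trans Finset.sum_comm]
    exact Finset.sum_congr rfl fun _ _ => Finset.sum_congr rfl fun _ _ =>
      Finset.sum_congr rfl fun _ _ => by ring
  exact this ▸ IsSumSq.sum_sq _ _

end Polynomial

theorem sum_nonpos_of_forall_prod_one_add_mul_le_one {ι : Type*} [Fintype ι] {u : ι → ℝ}
    (h : ∀ t ∈ Set.Icc (0 : ℝ) 1, ∏ i, (1 + t * u i) ≤ 1) : ∑ i, u i ≤ 0 := by
  classical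
  have hderiv : HasDerivAt (fun t => ∏ i, (1 + t * u i)) (∑ i, u i) 0 := by
    simpa using HasDerivAt.fun_finsetProd (u := Finset.univ) fun i _ =>
      ((hasDerivAt_id (0 : ℝ)).mul_const (u i)).const_add 1
  have hmax : IsLocalMaxOn (fun t => ∏ i, (1 + t * u i)) (Set.Icc 0 1) 0 :=
    IsMaxOn.localize fun t ht => by simpa using h t ht
  simpa using hmax.hasFDerivWithinAt_nonpos hderiv.hasFDerivAt.hasFDerivWithinAt
    (mem_posTangentConeAt_of_segment_subset (y := 1) (by simp [segment_eq_Icc]))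

section Spectahedron

variable {m : Type*} [Fintype m]

def spectahedron (m : Type*) [Fintype m] : Set (Matrix m m ℝ) :=
  {X | X.PosSemidef ∧ X.trace = 1}

theorem convex_spectahedron : Convex ℝ (spectahedron m) := by
  rintro X ⟨hX, hXtr⟩ Y ⟨hY, hYtr⟩ a b ha hb hab
  exact ⟨(hX.smul ha).add (hY.smul hb), by simp [trace_add, trace_smul, hXtr, hYtr, hab]⟩

theorem inv_card_smul_one_mem_spectahedron [DecidableEq m] [Nonempty m] :
    (Fintype.card m : ℝ)⁻¹ • (1 : Matrix m m ℝ) ∈ spectahedron m :=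
  ⟨PosSemidef.one.smul (by positivity), by simp [trace_smul]⟩

theorem isClosed_setOf_posSemidef : IsClosed {X : Matrix m m ℝ | X.PosSemidef} := by
  simp only [posSemidef_iff_dotProduct_mulVec, Set.ofPred_and, Set.ofPred_forall]
  exact (isClosed_eq (by fun_prop) (by fun_prop)).inter
    (isClosed_iInter fun x => isClosed_le (by fun_prop) (by fun_prop))

theorem abs_apply_le_one_of_mem_spectahedron {X : Matrix m m ℝ} (hX : X ∈ spectahedron m)
    (i j : m) : |X i j| ≤ 1 := by
  classical
  have hdiag : ∀ k, X k k ≤ 1 := fun k =>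
    hX.2 ▸ Finset.single_le_sum (f := fun l => X l l) (fun l _ => hX.1.diag_nonneg)
      (Finset.mem_univ k)
  have hdet := (hX.1.submatrix ![i, j]).det_nonneg
  rw [det_fin_two] at hdet
  simp only [submatrix_apply, Matrix.cons_val_zero, Matrix.cons_val_one] at hdet
  rw [← hX.1.isHermitian.apply j i, star_trivial] at hdet
  rw [← sq_le_one_iff_abs_le_one]
  nlinarith [hX.1.diag_nonneg (i := i), hX.1.diag_nonneg (i := j), hdiag i, hdiag j]

theorem isCompact_spectahedron : IsCompact (spectahedron m) := by
  have hbox : IsCompact (Set.univ.pi fun _ : m => Set.univ.pi fun _ : m => Set.Icc (-1 : ℝ) 1) :=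
    isCompact_univ_pi fun _ => isCompact_univ_pi fun _ => isCompact_Icc
  exact hbox.of_isClosed_subset
    (isClosed_setOf_posSemidef.inter (isClosed_eq (by fun_prop) (by fun_prop)))
    fun X hX i _ j _ => abs_le.1 (abs_apply_le_one_of_mem_spectahedron hX i j)

open scoped MatrixOrder in
theorem Matrix.PosSemidef.trace_mul_nonneg {A X : Matrix m m ℝ} (hA : A.PosSemidef)
    (hX : X.PosSemidef) : 0 ≤ (A * X).trace := by
  classical
  obtain ⟨B, rfl⟩ := CStarAlgebra.nonneg_iff_eq_star_mul_self.mp hX.nonneg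
  rw [← Matrix.mul_assoc, trace_mul_comm, ← Matrix.mul_assoc]
  exact (hA.mul_mul_conjTranspose_same B).trace_nonneg

theorem posSemidef_of_forall_trace_mul_nonneg {M : Matrix m m ℝ} (hM : M.IsHermitian)
    (h : ∀ Y ∈ spectahedron m, 0 ≤ (M * Y).trace) : M.PosSemidef := by
  refine PosSemidef.of_dotProduct_mulVec_nonneg hM fun x => ?_
  rcases eq_or_ne x 0 with rfl | hx
  · simp
  have hxx : 0 < x ⬝ᵥ x := by simpa using dotProduct_star_self_pos_iff.2 hx
  have hY : (x ⬝ᵥ x)⁻¹ • vecMulVec x x ∈ spectahedron m := by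
    refine ⟨PosSemidef.smul ?_ (inv_nonneg.2 hxx.le), ?_⟩
    · simpa using posSemidef_vecMulVec_self_star x
    · rw [trace_smul, trace_vecMulVec, smul_eq_mul, inv_mul_cancel₀ hxx.ne']
  have := h _ hY
  rw [Matrix.mul_smul, trace_smul, mul_vecMulVec, trace_vecMulVec, smul_eq_mul] at this
  rw [star_trivial, dotProduct_comm]
  exact nonneg_of_mul_nonneg_right this (inv_pos.2 hxx)

end Spectahedron

theorem continuous_prod_trace_mul {m ι : Type*} [Fintype m] [Fintype ι]
    (A : ι → Matrix m m ℝ) :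
    Continuous fun X : Matrix m m ℝ => ∏ i, (A i * X).trace := by
  fun_prop

section FirstOrderCondition

variable {m ι : Type*} [Fintype m] [Fintype ι] {A : ι → Matrix m m ℝ} {X₀ : Matrix m m ℝ}

theorem sum_trace_mul_div_le_card_of_isMaxOn
    (hmax : IsMaxOn (fun X => ∏ i, (A i * X).trace) (spectahedron m) X₀)
    (hX₀ : X₀ ∈ spectahedron m) (hpos : ∀ i, 0 < (A i * X₀).trace) {Y : Matrix m m ℝ}
    (hY : Y ∈ spectahedron m) :
    ∑ i, (A i * Y).trace / (A i * X₀).trace ≤ Fintype.card ι := by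
  suffices ∑ i, ((A i * Y).trace / (A i * X₀).trace - 1) ≤ 0 by
    simpa [Finset.sum_sub_distrib] using this
  refine sum_nonpos_of_forall_prod_one_add_mul_le_one fun t ht => ?_
  have hle := hmax (convex_spectahedron.add_smul_sub_mem hX₀ hY ht)
  have hfactor : ∀ i, (A i * (X₀ + t • (Y - X₀))).trace =
      (A i * X₀).trace * (1 + t * ((A i * Y).trace / (A i * X₀).trace - 1)) := fun i => by
    rw [Matrix.mul_add, Matrix.mul_smul, Matrix.mul_sub, trace_add, trace_smul, trace_sub,
      smul_eq_mul]
    field_simp [(hpos i).ne']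
  simp only [Set.mem_ofPred_eq, hfactor, Finset.prod_mul_distrib] at hle
  exact (mul_le_iff_le_one_right (Finset.prod_pos fun i _ => hpos i)).1 hle

theorem posSemidef_card_smul_one_sub_sum_of_isMaxOn (hA : ∀ i, (A i).PosSemidef)
    (hmax : IsMaxOn (fun X => ∏ i, (A i * X).trace) (spectahedron m) X₀)
    (hX₀ : X₀ ∈ spectahedron m) (hpos : ∀ i, 0 < (A i * X₀).trace) [DecidableEq m] :
    ((Fintype.card ι : ℝ) • (1 : Matrix m m ℝ) -
      ∑ i, ((A i * X₀).trace)⁻¹ • A i).PosSemidef := by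
  have hsum : (∑ i, ((A i * X₀).trace)⁻¹ • A i).PosSemidef :=
    posSemidef_sum _ fun i _ => (hA i).smul (inv_nonneg.2 (hpos i).le)
  refine posSemidef_of_forall_trace_mul_nonneg
    ((PosSemidef.one.smul (Nat.cast_nonneg _)).isHermitian.sub hsum.isHermitian) fun Y hY => ?_
  have := sum_trace_mul_div_le_card_of_isMaxOn hmax hX₀ hpos hY
  simp only [Matrix.sub_mul, Matrix.smul_mul, Matrix.one_mul, Finset.sum_mul, trace_sub,
    trace_smul, trace_sum, hY.2, smul_eq_mul, mul_one]
  simpa [div_eq_inv_mul] using this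

end FirstOrderCondition

section Certificate

variable {n : ℕ} {ι : Type*} [Fintype ι] {A : ι → Matrix (Fin n) (Fin n) ℝ}

theorem isSumSq_certificate_of_isMaxOn (hA : ∀ i, (A i).PosSemidef)
    {X₀ : Matrix (Fin n) (Fin n) ℝ}
    (hmax : IsMaxOn (fun X => ∏ i, (A i * X).trace) (spectahedron (Fin n)) X₀)
    (hX₀ : X₀ ∈ spectahedron (Fin n)) (hpos : 0 < ∏ i, (A i * X₀).trace) :
    IsSumSq (C (∏ i, (A i * X₀).trace) * normSqPoly n ^ Fintype.card ι -
      ∏ i, quadFormPoly n (A i)) := by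
  classical
  set a := fun i => (A i * X₀).trace
  set N := Fintype.card ι
  have ha : ∀ i, 0 < a i := fun i => ((hA i).trace_mul_nonneg hX₀.1).lt_of_ne fun h =>
    hpos.ne' (Finset.prod_eq_zero (Finset.mem_univ i) h.symm)
  set p := fun i => quadFormPoly n ((a i)⁻¹ • A i)
  have hp : ∀ i, IsSumSq (p i) := fun i =>
    isSumSq_quadFormPoly ((hA i).smul (inv_nonneg.2 (ha i).le))
  have hlin : IsSumSq (C (N : ℝ) * normSqPoly n - ∑ i, p i) := by
    have := isSumSq_quadFormPoly (posSemidef_card_smul_one_sub_sum_of_isMaxOn hA hmax hX₀ ha)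
    rwa [quadFormPoly_sub, quadFormPoly_smul, quadFormPoly_one, quadFormPoly_sum] at this
  have hpow := ((isSumSq_C (Nat.cast_nonneg N)).mul isSumSq_normSqPoly).pow_sub_pow
    (IsSumSq.sum fun i _ => hp i) hlin N
  have hamgm := isSumSq_sum_pow_card_sub_prod hp
  have hq : ∏ i, quadFormPoly n (A i) = C (∏ i, a i) * ∏ i, p i := by
    rw [map_prod, ← Finset.prod_mul_distrib]
    refine Finset.prod_congr rfl fun i _ => ?_
    rw [show p i = C (a i)⁻¹ * quadFormPoly n (A i) from quadFormPoly_smul _ _, ← mul_assoc,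
      ← C_mul, mul_inv_cancel₀ (ha i).ne', C_1, one_mul]
  have hN : (N : ℝ) ^ N ≠ 0 := by exact_mod_cast Nat.pow_self_pos.ne'
  have key : C (∏ i, a i) * normSqPoly n ^ N - ∏ i, quadFormPoly n (A i) =
      C ((∏ i, a i) / N ^ N) * ((C (N : ℝ) * normSqPoly n) ^ N - (∑ i, p i) ^ N +
        ((∑ i, p i) ^ N - (N : MvPolynomial (Fin n) ℝ) ^ N * ∏ i, p i)) := by
    rw [hq, ← map_natCast C, sub_add_sub_cancel, mul_pow, ← C_pow, ← mul_sub, ← mul_sub,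
      ← mul_assoc, ← C_mul, div_mul_cancel₀ _ hN]
  rw [key]
  exact (isSumSq_C (div_nonneg hpos.le (pow_nonneg (Nat.cast_nonneg N) N))).mul
    (hpow.add hamgm)

theorem exists_mem_spectahedron_isSumSq_certificate (hn : 0 < n)
    (hA : ∀ i, (A i).PosSemidef) :
    ∃ X₀ ∈ spectahedron (Fin n), IsSumSq (C (∏ i, (A i * X₀).trace) *
      normSqPoly n ^ Fintype.card ι - ∏ i, quadFormPoly n (A i)) := by
  have : Nonempty (Fin n) := ⟨⟨0, hn⟩⟩
  have hX₁ := inv_card_smul_one_mem_spectahedron (m := Fin n)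
  by_cases hzero : ∃ i, A i = 0
  · obtain ⟨i, hi⟩ := hzero
    refine ⟨_, hX₁, ?_⟩
    rw [Finset.prod_eq_zero (Finset.mem_univ i) (by simp [hi]),
      Finset.prod_eq_zero (Finset.mem_univ i) (by rw [hi, quadFormPoly_zero])]
    simp
  rw [not_exists] at hzero
  have htr : ∀ i, 0 < (A i).trace := fun i =>
    (hA i).trace_nonneg.lt_of_ne' ((hA i).trace_eq_zero_iff.not.2 (hzero i))
  obtain ⟨X₀, hX₀, hmax⟩ :=
    isCompact_spectahedron.exists_isMaxOn ⟨_, hX₁⟩ (continuous_prod_trace_mul A).continuousOn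
  refine ⟨X₀, hX₀, isSumSq_certificate_of_isMaxOn hA hmax hX₀ ?_⟩
  refine (Finset.prod_pos fun i _ => ?_).trans_le (hmax hX₁)
  rw [Matrix.mul_smul, Matrix.mul_one, trace_smul, smul_eq_mul]
  exact mul_pos (by positivity) (htr i)

end Certificate

theorem stmt_12_general (n d : ℕ) (hn : 0 < n)
    (A : Fin d → Matrix (Fin n) (Fin n) ℝ) (hA : ∀ i, (A i).PosSemidef) :
    sInf {v : ℝ | ∃ γ : ℝ, 0 ≤ γ ∧
        IsSOS (C γ * normSqPoly n ^ d - ∏ i, quadFormPoly n (A i)) ∧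
        v = γ ^ ((d : ℝ)⁻¹)} ≤
      sSup {v : ℝ | ∃ X : Matrix (Fin n) (Fin n) ℝ, X.PosSemidef ∧ X.trace = 1 ∧
        v = (∏ i, (A i * X).trace) ^ ((d : ℝ)⁻¹)} := by
  obtain ⟨X₀, hX₀, hcert⟩ := exists_mem_spectahedron_isSumSq_certificate hn hA
  rw [Fintype.card_fin] at hcert
  have hγ : 0 ≤ ∏ i, (A i * X₀).trace :=
    Finset.prod_nonneg fun i _ => (hA i).trace_mul_nonneg hX₀.1
  refine le_trans (b := (∏ i, (A i * X₀).trace) ^ ((d : ℝ)⁻¹)) (csInf_le ?_ ?_)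
    (le_csSup ?_ ?_)
  · exact ⟨0, by rintro _ ⟨γ, hγ, -, rfl⟩; exact Real.rpow_nonneg hγ _⟩
  · exact ⟨_, hγ, isSOS_iff_isSumSq.2 hcert, rfl⟩
  · refine BddAbove.mono ?_ (isCompact_spectahedron.image ((continuous_prod_trace_mul A).rpow_const
      (p := (d : ℝ)⁻¹) fun _ => Or.inr (by positivity))).bddAbove
    rintro _ ⟨X, hX, hXtr, rfl⟩
    exact ⟨X, ⟨hX, hXtr⟩, rfl⟩
  · exact ⟨X₀, hX₀.1, hX₀.2, rfl⟩

/-- `OptSOS_d(A) ≤ OptSDP(A)`: the infimum of `γ^{1/d}` over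
SOS certificates `γ‖x‖^{2d} − ∏ᵢ ⟨x, Aᵢ x⟩` is at most the SDP relaxation value. -/
theorem stmt_12 (n d : ℕ) (hn : 0 < n) (hd : 0 < d)
    (A : Fin d → Matrix (Fin n) (Fin n) ℝ) (hA : ∀ i, (A i).PosSemidef) :
    sInf {v : ℝ | ∃ γ : ℝ, 0 ≤ γ ∧
        IsSOS (C γ * normSqPoly n ^ d - ∏ i, quadFormPoly n (A i)) ∧
        v = γ ^ ((d : ℝ)⁻¹)} ≤
      sSup {v : ℝ | ∃ X : Matrix (Fin n) (Fin n) ℝ, X.PosSemidef ∧ X.trace = 1 ∧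
        v = (∏ i, (A i * X).trace) ^ ((d : ℝ)⁻¹)} :=
  stmt_12_general n d hn A hA
end

section
/- There exists a universal constant C such that for every integer k ≥ C and every simple 3-regular graph G (on any number n of vertices, with at least one edge), Opt(G) < (332/331) · MaxCut(G), where Q_G = (1/2)(I_n − A_G/3), MaxCut(G) = max_{x ∈ {±1/√n}^n} x^T Q_G x, and Opt(G) = max_{‖x‖_2=1} x^T Q_G x · ∏_{i=1}^n (n x_i^2)^k. -/
open Matrix

/-- `Q_G = (1/2)(I − A_G/3)` for a 3-regular graph `G`. -/
noncomputable def QG (n : ℕ) (G : SimpleGraph (Fin n)) [DecidableRel G.Adj] :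
    Matrix (Fin n) (Fin n) ℝ :=
  (2 : ℝ)⁻¹ • ((1 : Matrix (Fin n) (Fin n) ℝ) - (3 : ℝ)⁻¹ • G.adjMatrix ℝ)

/-- `MaxCut(G) = max_{x ∈ {±1/√n}ⁿ} xᵀ Q_G x`. -/
noncomputable def maxCutVal (n : ℕ) (G : SimpleGraph (Fin n)) [DecidableRel G.Adj] : ℝ :=
  sSup {w : ℝ | ∃ x : Fin n → ℝ,
    (∀ i, x i = 1 / Real.sqrt n ∨ x i = -(1 / Real.sqrt n)) ∧
    w = x ⬝ᵥ (QG n G).mulVec x}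

/-- `Opt(G) = max_{‖x‖₂=1} xᵀ Q_G x · ∏ᵢ (n xᵢ²)^k`. -/
noncomputable def optGVal (n : ℕ) (G : SimpleGraph (Fin n)) [DecidableRel G.Adj]
    (k : ℕ) : ℝ :=
  sSup {w : ℝ | ∃ x : EuclideanSpace ℝ (Fin n), ‖x‖ = 1 ∧
    w = (x ⬝ᵥ (QG n G).mulVec x) * ∏ i, ((n : ℝ) * (x i) ^ 2) ^ k}

/-!
Since `G` is 3-regular, `Q_G` is one sixth of the graph Laplacian, so `q(x) = xᵀ Q_G x` is a
positive semidefinite form with `q(x) ≤ ‖x‖²`, and Cauchy–Schwarz for `q` gives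
`|q(x) - q(y)| ≤ 2 ‖x - y‖` for unit vectors. The average of `q` over all `±1` vectors is
`tr Q_G = n / 2`, so `MaxCut(G) ≥ 1 / 2`.

For a unit vector `x` let `y` be the cut vector with the signs of `x`. Applying
`a² ≤ exp (2 (|a| - 1))` to `a = √n xᵢ` gives `∏ n xᵢ² ≤ exp (-n ‖x - y‖²)`. So either
`‖x - y‖ ≤ 1 / 2000` and `q(x) ≤ q(y) + 1 / 1000 ≤ MaxCut(G) + 1 / 1000`, or the `k`-th power of
the product is below `1 / 1000` once `k ≥ 4 · 10⁹`. Hence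
`Opt(G) ≤ MaxCut(G) + 1 / 1000 < (332 / 331) MaxCut(G)`.
-/

open Matrix Finset Real

section SignVectors

variable {ι : Type*}

def signVec (σ : ι → Bool) (i : ι) : ℝ := if σ i then 1 else -1

lemma signVec_eq_one_or_neg_one (σ : ι → Bool) (i : ι) : signVec σ i = 1 ∨ signVec σ i = -1 := by
  unfold signVec; split_ifs <;> simp

variable [Fintype ι] [DecidableEq ι]

lemma sum_signVec_mul_signVec (i j : ι) :
    ∑ σ : ι → Bool, signVec σ i * signVec σ j =
      if i = j then (2 : ℝ) ^ Fintype.card ι else 0 := by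
  split_ifs with hij
  · subst hij
    have hsq : ∀ σ : ι → Bool, signVec σ i * signVec σ i = 1 := fun σ => by
      rcases signVec_eq_one_or_neg_one σ i with h | h <;> simp [h]
    simp [hsq]
  · -- flipping the sign at `i` negates every summand
    have hflip : Function.Involutive fun σ : ι → Bool => Function.update σ i (!σ i) := by
      intro σ
      ext a
      by_cases h : a = i
      · subst h; simp
      · simp [Function.update_of_ne h]
    have hneg : ∀ σ, signVec (hflip.toPerm _ σ) i * signVec (hflip.toPerm _ σ) j =
        -(signVec σ i * signVec σ j) := by
      intro σ
      simp only [Function.Involutive.coe_toPerm, signVec, Function.update_self,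
        Function.update_of_ne (Ne.symm hij)]
      cases σ i <;> cases σ j <;> norm_num
    have := Equiv.sum_comp (hflip.toPerm _) fun σ => signVec σ i * signVec σ j
    simp only [hneg, sum_neg_distrib] at this
    linarith

lemma sum_signVec_dotProduct_mulVec (M : Matrix ι ι ℝ) :
    ∑ σ : ι → Bool, signVec σ ⬝ᵥ M *ᵥ signVec σ = 2 ^ Fintype.card ι * M.trace := by
  have h : ∀ σ : ι → Bool, signVec σ ⬝ᵥ M *ᵥ signVec σ =
      ∑ i, ∑ j, M i j * (signVec σ i * signVec σ j) := fun σ => by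
    simp only [dotProduct, mulVec, mul_sum]
    exact sum_congr rfl fun i _ => sum_congr rfl fun j _ => by ring
  simp only [h]
  rw [sum_comm]
  simp only [← mul_sum, sum_comm (γ := ι → Bool), sum_signVec_mul_signVec, mul_ite, mul_zero,
    sum_ite_eq, mem_univ, if_true]
  simp [trace, mul_comm, mul_sum]

lemma exists_sign_trace_le (M : Matrix ι ι ℝ) :
    ∃ s : ι → ℝ, (∀ i, s i = 1 ∨ s i = -1) ∧ M.trace ≤ s ⬝ᵥ M *ᵥ s := by
  have hsum : ∑ _σ : ι → Bool, M.trace ≤ ∑ σ : ι → Bool, signVec σ ⬝ᵥ M *ᵥ signVec σ := by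
    simp [sum_signVec_dotProduct_mulVec]
  obtain ⟨σ, -, hσ⟩ := exists_le_of_sum_le univ_nonempty hsum
  exact ⟨signVec σ, signVec_eq_one_or_neg_one σ, hσ⟩

end SignVectors

section QuadraticForms

variable {ι : Type*} [Fintype ι]

lemma Matrix.PosSemidef.dotProduct_mulVec_comm {M : Matrix ι ι ℝ} (hM : M.PosSemidef)
    (x y : ι → ℝ) : x ⬝ᵥ M *ᵥ y = y ⬝ᵥ M *ᵥ x := by
  have hMt : Mᵀ = M := by rw [← conjTranspose_eq_transpose_of_trivial, hM.1.eq]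
  rw [dotProduct_mulVec, ← hMt, vecMul_transpose, hMt, dotProduct_comm]

lemma Matrix.PosSemidef.sq_dotProduct_mulVec_le {M : Matrix ι ι ℝ} (hM : M.PosSemidef)
    (x y : ι → ℝ) : (x ⬝ᵥ M *ᵥ y) ^ 2 ≤ (x ⬝ᵥ M *ᵥ x) * (y ⬝ᵥ M *ᵥ y) := by
  classical
  have hB := LinearMap.BilinForm.apply_mul_apply_le_of_forall_zero_le (toLinearMap₂' ℝ M)
    (fun z => by simpa [toLinearMap₂'_apply'] using hM.dotProduct_mulVec_nonneg z) x y
  rw [sq]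
  simpa only [toLinearMap₂'_apply', hM.dotProduct_mulVec_comm y x] using hB

lemma Matrix.PosSemidef.sq_sub_dotProduct_mulVec_le {M : Matrix ι ι ℝ} (hM : M.PosSemidef)
    (hM₁ : ∀ x, x ⬝ᵥ M *ᵥ x ≤ x ⬝ᵥ x) {x y : ι → ℝ} (hx : x ⬝ᵥ x = 1) (hy : y ⬝ᵥ y = 1) :
    (x ⬝ᵥ M *ᵥ x - y ⬝ᵥ M *ᵥ y) ^ 2 ≤ 4 * ((x - y) ⬝ᵥ (x - y)) := by
  have hdiff : x ⬝ᵥ M *ᵥ x - y ⬝ᵥ M *ᵥ y = (x - y) ⬝ᵥ M *ᵥ (x + y) := by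
    simp only [mulVec_add, dotProduct_add, sub_dotProduct, hM.dotProduct_mulVec_comm y x]
    ring
  have hpar : (x + y) ⬝ᵥ (x + y) + (x - y) ⬝ᵥ (x - y) = 2 * (x ⬝ᵥ x) + 2 * (y ⬝ᵥ y) := by
    simp only [add_dotProduct, dotProduct_add, sub_dotProduct, dotProduct_sub,
      dotProduct_comm y x]
    ring
  have hsub : 0 ≤ (x - y) ⬝ᵥ (x - y) := by
    simpa only [star_trivial] using dotProduct_self_star_nonneg (x - y)
  rw [hdiff]
  calc ((x - y) ⬝ᵥ M *ᵥ (x + y)) ^ 2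
      ≤ ((x - y) ⬝ᵥ M *ᵥ (x - y)) * ((x + y) ⬝ᵥ M *ᵥ (x + y)) := hM.sq_dotProduct_mulVec_le _ _
    _ ≤ ((x - y) ⬝ᵥ (x - y)) * 4 :=
        mul_le_mul (hM₁ _) (by linarith [hM₁ (x + y)]) (hM.dotProduct_mulVec_nonneg _) hsub
    _ = 4 * ((x - y) ⬝ᵥ (x - y)) := mul_comm _ _

end QuadraticForms

section ProductBound

lemma sq_le_exp_two_mul_abs_sub_one (a : ℝ) : a ^ 2 ≤ exp (2 * (|a| - 1)) := by
  have h : |a| ≤ exp (|a| - 1) := by linarith [add_one_le_exp (|a| - 1)]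
  calc a ^ 2 = |a| ^ 2 := (sq_abs a).symm
    _ ≤ exp (|a| - 1) ^ 2 := pow_le_pow_left₀ (abs_nonneg a) h 2
    _ = exp (2 * (|a| - 1)) := by rw [← exp_nat_mul]; norm_num

lemma prod_sq_le_exp {ι : Type*} [Fintype ι] {z : ι → ℝ} (hz : ∑ i, z i ^ 2 = Fintype.card ι) :
    ∏ i, z i ^ 2 ≤ exp (-∑ i, (|z i| - 1) ^ 2) := by
  have hsum : ∑ i, 2 * (|z i| - 1) = -∑ i, (|z i| - 1) ^ 2 := by
    have hterm : ∀ i, 2 * (|z i| - 1) + (|z i| - 1) ^ 2 = z i ^ 2 - 1 := fun i => by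
      rw [← sq_abs (z i)]; ring
    have h0 : ∑ i, (2 * (|z i| - 1) + (|z i| - 1) ^ 2) = 0 := by
      simp [hterm, sum_sub_distrib, hz]
    rw [sum_add_distrib] at h0
    linarith
  calc ∏ i, z i ^ 2 ≤ ∏ i, exp (2 * (|z i| - 1)) :=
        prod_le_prod (fun i _ => sq_nonneg _) (fun i _ => sq_le_exp_two_mul_abs_sub_one (z i))
    _ = exp (-∑ i, (|z i| - 1) ^ 2) := by rw [← exp_sum, hsum]

lemma pow_le_inv_one_add_mul_of_le_exp_neg {P s : ℝ} (hP₀ : 0 ≤ P) (hP : P ≤ exp (-s))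
    (hs : 0 ≤ s) (k : ℕ) : P ^ k ≤ (1 + k * s)⁻¹ :=
  calc P ^ k ≤ exp (-s) ^ k := pow_le_pow_left₀ hP₀ hP k
    _ = (exp (k * s))⁻¹ := by rw [← exp_nat_mul, ← exp_neg, mul_neg]
    _ ≤ (1 + k * s)⁻¹ := by
        gcongr
        linarith [add_one_le_exp (k * s)]

end ProductBound

section Laplacian

variable {V : Type*} [Fintype V] {G : SimpleGraph V} [DecidableRel G.Adj]

lemma SimpleGraph.IsRegularOfDegree.sum_sum_adj_sq {d : ℕ} (hG : G.IsRegularOfDegree d)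
    (x : V → ℝ) : ∑ i, ∑ j, (if G.Adj i j then x i ^ 2 else 0) = d * ∑ i, x i ^ 2 := by
  rw [mul_sum]
  refine sum_congr rfl fun i _ => ?_
  rw [← sum_filter, sum_const, ← G.neighborFinset_eq_filter, G.card_neighborFinset_eq_degree,
    hG.degree_eq, nsmul_eq_mul]

lemma SimpleGraph.IsRegularOfDegree.dotProduct_lapMatrix_mulVec_le [DecidableEq V] {d : ℕ}
    (hG : G.IsRegularOfDegree d) (x : V → ℝ) :
    x ⬝ᵥ G.lapMatrix ℝ *ᵥ x ≤ 2 * d * (x ⬝ᵥ x) := by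
  have hterm : ∀ i j, (if G.Adj i j then (x i - x j) ^ 2 else 0) ≤
      2 * (if G.Adj i j then x i ^ 2 else 0) + 2 * (if G.Adj j i then x j ^ 2 else 0) := by
    intro i j
    by_cases h : G.Adj i j
    · simp only [h, G.adj_comm j i, if_true]
      nlinarith [sq_nonneg (x i + x j)]
    · simp [h, G.adj_comm j i]
  have hsum := sum_le_sum fun i (_ : i ∈ univ) => sum_le_sum fun j (_ : j ∈ univ) => hterm i j
  simp only [sum_add_distrib, ← mul_sum] at hsum
  rw [sum_comm (f := fun i j => if G.Adj j i then x j ^ 2 else 0), hG.sum_sum_adj_sq] at hsum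
  rw [← toLinearMap₂'_apply', G.lapMatrix_toLinearMap₂' ℝ]
  simp only [dotProduct, ← sq]
  linarith

end Laplacian

section MaxCut

variable {n : ℕ} {G : SimpleGraph (Fin n)} [DecidableRel G.Adj]

lemma QG_eq_smul_lapMatrix (hG : G.IsRegularOfDegree 3) :
    QG n G = (6 : ℝ)⁻¹ • G.lapMatrix ℝ := by
  ext i j
  by_cases hij : i = j
  · subst hij; simp [QG, SimpleGraph.lapMatrix, SimpleGraph.degMatrix, hG.degree_eq]; norm_num
  · simp [QG, SimpleGraph.lapMatrix, SimpleGraph.degMatrix, hij]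
    norm_num

lemma posSemidef_QG (hG : G.IsRegularOfDegree 3) : (QG n G).PosSemidef := by
  rw [QG_eq_smul_lapMatrix hG]
  exact (SimpleGraph.posSemidef_lapMatrix ℝ G).smul (by norm_num)

lemma dotProduct_QG_mulVec_le (hG : G.IsRegularOfDegree 3) (x : Fin n → ℝ) :
    x ⬝ᵥ QG n G *ᵥ x ≤ x ⬝ᵥ x := by
  rw [QG_eq_smul_lapMatrix hG, smul_mulVec, dotProduct_smul, smul_eq_mul]
  have hL := hG.dotProduct_lapMatrix_mulVec_le x
  push_cast at hL
  linarith

lemma trace_QG : (QG n G).trace = n / 2 := by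
  simp [QG, trace_sub, SimpleGraph.trace_adjMatrix, div_eq_inv_mul]

def IsCutVector (n : ℕ) (x : Fin n → ℝ) : Prop :=
  ∀ i, x i = 1 / √n ∨ x i = -(1 / √n)

lemma IsCutVector.dotProduct_self {x : Fin n → ℝ} (hn : 0 < n) (hx : IsCutVector n x) :
    x ⬝ᵥ x = 1 := by
  have hsq : ∀ i, x i * x i = 1 / n := fun i => by
    rcases hx i with h | h <;> simp [h, ← sq, Nat.cast_nonneg]
  simp [dotProduct, hsq, hn.ne']

lemma le_maxCutVal (hG : G.IsRegularOfDegree 3) (hn : 0 < n) {x : Fin n → ℝ}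
    (hx : IsCutVector n x) : x ⬝ᵥ QG n G *ᵥ x ≤ maxCutVal n G := by
  refine le_csSup ⟨1, ?_⟩ ⟨x, hx, rfl⟩
  rintro w ⟨y, hy, rfl⟩
  exact (dotProduct_QG_mulVec_le hG y).trans (IsCutVector.dotProduct_self hn hy).le

lemma half_le_maxCutVal (hG : G.IsRegularOfDegree 3) (hn : 0 < n) : 1 / 2 ≤ maxCutVal n G := by
  have hn' : (0 : ℝ) < n := by exact_mod_cast hn
  obtain ⟨s, hs, htr⟩ := exists_sign_trace_le (QG n G)
  rw [trace_QG] at htr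
  have hx : IsCutVector n ((1 / √n) • s) := fun i => by
    rcases hs i with h | h <;> simp [h]
  have hscale : ((1 / √n) • s) ⬝ᵥ QG n G *ᵥ ((1 / √n) • s) = (s ⬝ᵥ QG n G *ᵥ s) / n := by
    simp only [mulVec_smul, dotProduct_smul, smul_dotProduct, smul_eq_mul, ← mul_assoc, ← sq,
      div_pow, one_pow, Real.sq_sqrt hn'.le]
    ring
  calc 1 / 2 ≤ (s ⬝ᵥ QG n G *ᵥ s) / n := by rw [le_div_iff₀ hn']; linarith
    _ ≤ maxCutVal n G := hscale ▸ le_maxCutVal hG hn hx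

end MaxCut

section Rounding

variable {n : ℕ}

lemma exists_isCutVector_prod_le_exp (hn : 0 < n) {x : Fin n → ℝ} (hx : x ⬝ᵥ x = 1) :
    ∃ y, IsCutVector n y ∧ ∏ i, ((n : ℝ) * x i ^ 2) ≤ exp (-(n * ((x - y) ⬝ᵥ (x - y)))) := by
  have hn' : (0 : ℝ) < n := by exact_mod_cast hn
  set y : Fin n → ℝ := fun i => if 0 ≤ x i then 1 / √n else -(1 / √n)
  refine ⟨y, fun i => by by_cases h : 0 ≤ x i <;> simp [y, h], ?_⟩
  have hz : ∑ i, (√n * x i) ^ 2 = Fintype.card (Fin n) := by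
    have hx' : ∑ i, x i ^ 2 = 1 := by simpa [dotProduct, sq] using hx
    simp [mul_pow, Real.sq_sqrt hn'.le, ← mul_sum, hx']
  have hdist : ∀ i, (|√n * x i| - 1) ^ 2 = n * (x i - y i) ^ 2 := by
    intro i
    have hscale : |√n * x i| - 1 = √n * (|x i| - 1 / √n) := by
      rw [abs_mul, abs_of_nonneg (sqrt_nonneg _)]
      field_simp
    rw [hscale, mul_pow, Real.sq_sqrt hn'.le]
    by_cases h : 0 ≤ x i
    · simp [y, h, abs_of_nonneg h]
    · simp only [y, h, if_false, abs_of_neg (not_le.mp h)]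
      ring
  have hP := prod_sq_le_exp hz
  simp only [mul_pow, Real.sq_sqrt hn'.le, hdist, ← mul_sum] at hP
  simpa [dotProduct, sq] using hP

end Rounding

section MainEstimate

variable {n : ℕ} {G : SimpleGraph (Fin n)} [DecidableRel G.Adj]

lemma dotProduct_QG_mulVec_le_of_near (hG : G.IsRegularOfDegree 3) (hn : 0 < n)
    {x y : Fin n → ℝ} (hx : x ⬝ᵥ x = 1) (hy : IsCutVector n y)
    (hxy : (x - y) ⬝ᵥ (x - y) ≤ 1 / 4000000) :
    x ⬝ᵥ QG n G *ᵥ x ≤ maxCutVal n G + 1 / 1000 := by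
  have hsq := (posSemidef_QG hG).sq_sub_dotProduct_mulVec_le (dotProduct_QG_mulVec_le hG) hx
    (IsCutVector.dotProduct_self hn hy)
  have hround : x ⬝ᵥ QG n G *ᵥ x - y ⬝ᵥ QG n G *ᵥ y ≤ 1 / 1000 :=
    (le_abs_self _).trans (abs_le_of_sq_le_sq (by linarith) (by norm_num))
  linarith [le_maxCutVal hG hn hy]

lemma dotProduct_QG_mulVec_mul_prod_pow_le (hG : G.IsRegularOfDegree 3) (hn : 0 < n) {k : ℕ}
    (hk : 4 * 10 ^ 9 ≤ k) {x : Fin n → ℝ} (hx : x ⬝ᵥ x = 1) :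
    (x ⬝ᵥ QG n G *ᵥ x) * ∏ i, ((n : ℝ) * x i ^ 2) ^ k ≤ maxCutVal n G + 1 / 1000 := by
  obtain ⟨y, hy, hP⟩ := exists_isCutVector_prod_le_exp hn hx
  set q := x ⬝ᵥ QG n G *ᵥ x
  set P := ∏ i, ((n : ℝ) * x i ^ 2)
  set t := (x - y) ⬝ᵥ (x - y)
  have hq₀ : 0 ≤ q := by simpa using (posSemidef_QG hG).dotProduct_mulVec_nonneg x
  have hq₁ : q ≤ 1 := hx ▸ dotProduct_QG_mulVec_le hG x
  have hP₀ : 0 ≤ P := prod_nonneg fun i _ => by positivity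
  have hn₁ : (1 : ℝ) ≤ n := by exact_mod_cast hn
  have ht₀ : 0 ≤ t := by simpa only [star_trivial] using dotProduct_self_star_nonneg (x - y)
  rw [prod_pow]
  rcases le_or_gt t (1 / 4000000) with ht | ht
  · have hP₁ : P ≤ 1 := hP.trans (exp_le_one_iff.mpr (neg_nonpos.mpr (by positivity)))
    calc q * P ^ k ≤ q := mul_le_of_le_one_right hq₀ (pow_le_one₀ hP₀ hP₁)
      _ ≤ maxCutVal n G + 1 / 1000 := dotProduct_QG_mulVec_le_of_near hG hn hx hy ht
  · have hk' : (4 * 10 ^ 9 : ℝ) ≤ k := by exact_mod_cast hk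
    have hknt : 999 ≤ k * (n * t) := by
      have hkt : (1000 : ℝ) ≤ k * t := by nlinarith
      nlinarith [mul_le_mul_of_nonneg_left hn₁ (mul_nonneg k.cast_nonneg ht₀)]
    have hPk : P ^ k ≤ 1 / 1000 :=
      (pow_le_inv_one_add_mul_of_le_exp_neg hP₀ hP (by positivity) k).trans
        (by rw [one_div]; gcongr; linarith)
    calc q * P ^ k ≤ 1 * (1 / 1000) := mul_le_mul hq₁ hPk (by positivity) zero_le_one
      _ ≤ maxCutVal n G + 1 / 1000 := by linarith [half_le_maxCutVal hG hn]

end MainEstimate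

/-- there is a universal constant `C` such that for all `k ≥ C`
and all simple 3-regular graphs `G` with at least one edge,
`Opt(G) < (332/331) · MaxCut(G)`. -/
theorem stmt_18 :
    ∃ C : ℕ, ∀ (k : ℕ), C ≤ k →
      ∀ (n : ℕ) (G : SimpleGraph (Fin n)) [DecidableRel G.Adj],
        G.IsRegularOfDegree 3 → (∃ u v, G.Adj u v) →
        optGVal n G k < (332 / 331 : ℝ) * maxCutVal n G := by
  refine ⟨4 * 10 ^ 9, fun k hk n G _ hG ⟨u, _, _⟩ => ?_⟩
  have hn : 0 < n := u.pos
  have hopt : optGVal n G k ≤ maxCutVal n G + 1 / 1000 := by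
    refine Real.sSup_le ?_ (by linarith [half_le_maxCutVal hG hn])
    rintro w ⟨x, hx, rfl⟩
    refine dotProduct_QG_mulVec_mul_prod_pow_le hG hn hk ?_
    have hnorm := EuclideanSpace.real_norm_sq_eq x
    rw [hx, one_pow] at hnorm
    simpa [dotProduct, sq] using hnorm.symm
  linarith [half_le_maxCutVal hG hn]
end
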